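/- arXiv:2509.14376 — 4 statements merged into one kernel-verified Lean document; each statement's English description precedes it below -/
import Mathlib

section
/- Let U be a real Hilbert space, μ ∈ (0,1), ν ≥ 0, and define C : U → U by C(z) = (ν + ‖z‖^{−μ} + ‖z‖^{μ})·z for z ≠ 0 and C(0) = 0. Then C is monotone: ⟨C(z₁) − C(z₂), z₁ − z₂⟩ ≥ 0 for all z₁, z₂ ∈ U. -/
open scoped RealInnerProductSpace

theorem C_monotone
    {U : Type*} [NormedAddCommGroup U] [InnerProductSpace ℝ U]
    (μ ν : ℝ) (hμ0 : 0 < μ) (hμ1 : μ < 1) (hν : 0 ≤ ν)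
    (C : U → U)
    (hC : ∀ z : U, z ≠ 0 → C z = (ν + ‖z‖ ^ (-μ) + ‖z‖ ^ μ) • z)
    (hC0 : C 0 = 0) :
    ∀ z₁ z₂ : U, 0 ≤ ⟪C z₁ - C z₂, z₁ - z₂⟫ := by
  have hfpos : ∀ r : ℝ, 0 < r → 0 < ν + r ^ (-μ) + r ^ μ := by
    intro r hr
    have h1 : 0 < r ^ (-μ) := Real.rpow_pos_of_pos hr _
    have h2 : 0 < r ^ μ := Real.rpow_pos_of_pos hr _
    linarith
  have hg : ∀ r : ℝ, 0 < r →
      (ν + r ^ (-μ) + r ^ μ) * r = ν * r + r ^ (1 - μ) + r ^ (1 + μ) := by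
    intro r hr
    have h1 : r ^ (-μ) * r = r ^ (1 - μ) := by
      rw [show (1 : ℝ) - μ = -μ + 1 by ring, Real.rpow_add hr, Real.rpow_one]
    have h2 : r ^ μ * r = r ^ (1 + μ) := by
      rw [show (1 : ℝ) + μ = μ + 1 by ring, Real.rpow_add hr, Real.rpow_one]
    calc (ν + r ^ (-μ) + r ^ μ) * r = ν * r + r ^ (-μ) * r + r ^ μ * r := by ring
      _ = ν * r + r ^ (1 - μ) + r ^ (1 + μ) := by rw [h1, h2]
  have gmono : ∀ x y : ℝ, 0 < x → 0 < y → x ≤ y →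
      (ν + x ^ (-μ) + x ^ μ) * x ≤ (ν + y ^ (-μ) + y ^ μ) * y := by
    intro x y hx hy hxy
    rw [hg x hx, hg y hy]
    have t1 : ν * x ≤ ν * y := mul_le_mul_of_nonneg_left hxy hν
    have t2 : x ^ (1 - μ) ≤ y ^ (1 - μ) :=
      Real.rpow_le_rpow hx.le hxy (by linarith)
    have t3 : x ^ (1 + μ) ≤ y ^ (1 + μ) :=
      Real.rpow_le_rpow hx.le hxy (by linarith)
    linarith
  have key : ∀ x y : ℝ, 0 < x → 0 < y →
      0 ≤ ((ν + x ^ (-μ) + x ^ μ) * x - (ν + y ^ (-μ) + y ^ μ) * y) * (x - y) := by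
    intro x y hx hy
    rcases le_total x y with h | h
    · nlinarith [gmono x y hx hy h]
    · exact mul_nonneg (by linarith [gmono y x hy hx h]) (by linarith)
  intro z₁ z₂
  rcases eq_or_ne z₁ 0 with h1 | h1
  · rcases eq_or_ne z₂ 0 with h2 | h2
    · simp [h1, h2, hC0]
    · have hb := hfpos ‖z₂‖ (norm_pos_iff.mpr h2)
      rw [h1, hC0, hC z₂ h2]
      simp only [zero_sub, inner_neg_neg, real_inner_smul_left,
        real_inner_self_eq_norm_sq]
      exact mul_nonneg hb.le (sq_nonneg _)
  · rcases eq_or_ne z₂ 0 with h2 | h2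
    · have ha := hfpos ‖z₁‖ (norm_pos_iff.mpr h1)
      rw [h2, hC0, hC z₁ h1]
      simp only [sub_zero, real_inner_smul_left, real_inner_self_eq_norm_sq]
      exact mul_nonneg ha.le (sq_nonneg _)
    · have hn1 : (0 : ℝ) < ‖z₁‖ := norm_pos_iff.mpr h1
      have hn2 : (0 : ℝ) < ‖z₂‖ := norm_pos_iff.mpr h2
      have ha := hfpos ‖z₁‖ hn1
      have hb := hfpos ‖z₂‖ hn2
      rw [hC z₁ h1, hC z₂ h2]
      have expand :
          ⟪(ν + ‖z₁‖ ^ (-μ) + ‖z₁‖ ^ μ) • z₁ - (ν + ‖z₂‖ ^ (-μ) + ‖z₂‖ ^ μ) • z₂,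
            z₁ - z₂⟫ =
          (ν + ‖z₁‖ ^ (-μ) + ‖z₁‖ ^ μ) * ‖z₁‖ ^ 2 +
            (ν + ‖z₂‖ ^ (-μ) + ‖z₂‖ ^ μ) * ‖z₂‖ ^ 2 -
            ((ν + ‖z₁‖ ^ (-μ) + ‖z₁‖ ^ μ) + (ν + ‖z₂‖ ^ (-μ) + ‖z₂‖ ^ μ)) *
              ⟪z₁, z₂⟫ := by
        simp only [inner_sub_left, inner_sub_right, real_inner_smul_left,
          real_inner_self_eq_norm_sq, real_inner_comm z₂ z₁]
        ring
      rw [expand]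
      have hk := key ‖z₁‖ ‖z₂‖ hn1 hn2
      have hip : ⟪z₁, z₂⟫ ≤ ‖z₁‖ * ‖z₂‖ := real_inner_le_norm z₁ z₂
      nlinarith [mul_le_mul_of_nonneg_left hip (by linarith :
        (0 : ℝ) ≤ (ν + ‖z₁‖ ^ (-μ) + ‖z₁‖ ^ μ) + (ν + ‖z₂‖ ^ (-μ) + ‖z₂‖ ^ μ))]
end

section
/- Let V : [0,∞) → [0,∞) be continuously differentiable, and suppose β > 0, μ ∈ (0,1) are such that (1/2)V'(t) ≤ −β^{2−μ}V(t)^{1−μ/2} − β^{2+μ}V(t)^{1+μ/2} whenever V(t) > 0. Then the function t ↦ arctan(β^μ V(t)^{μ/2}) satisfies arctan(β^μ V(t)^{μ/2}) ≤ arctan(β^μ V(0)^{μ/2}) − β²μ·t for all t with V on [0,t] positive; consequently V(t) = 0 for all t ≥ arctan(β^μ V(0)^{μ/2})/(β²μ), and this settling time is bounded above by π/(2μβ²) uniformly in V(0). -/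
open Real

private lemma key_ineq (β μ v w : ℝ) (hβ : 0 < β) (hμ0 : 0 < μ) (hv : 0 < v)
    (h : (1 / 2) * w ≤ -β ^ (2 - μ) * v ^ (1 - μ / 2) - β ^ (2 + μ) * v ^ (1 + μ / 2)) :
    1 / (1 + (β ^ μ * v ^ (μ / 2)) ^ 2) * (β ^ μ * (μ / 2 * v ^ (μ / 2 - 1) * w)) + β ^ 2 * μ ≤ 0 := by
  have hbm : (0:ℝ) < β ^ μ := rpow_pos_of_pos hβ μ
  have hc : (0:ℝ) < μ * β ^ μ * v ^ (μ / 2 - 1) := by positivity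
  have h2 := mul_le_mul_of_nonneg_left h hc.le
  have e1 : β ^ μ * β ^ (2 - μ) = β ^ (2:ℕ) := by
    rw [← rpow_add hβ, ← rpow_natCast β 2]; norm_num
  have e2 : v ^ (μ / 2 - 1) * v ^ (1 - μ / 2) = 1 := by
    rw [← rpow_add hv]; norm_num
  have e3 : β ^ μ * β ^ (2 + μ) = β ^ (2:ℕ) * (β ^ μ * β ^ μ) := by
    rw [← rpow_add hβ, ← rpow_add hβ, ← rpow_natCast β 2, ← rpow_add hβ]; ring_nf
  have e4 : v ^ (μ / 2 - 1) * v ^ (1 + μ / 2) = v ^ (μ / 2) * v ^ (μ / 2) := by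
    rw [← rpow_add hv, ← rpow_add hv]; ring_nf
  have hA : (0:ℝ) < 1 + (β ^ μ * v ^ (μ / 2)) ^ 2 := by positivity
  have h3 : β ^ μ * (μ / 2 * v ^ (μ / 2 - 1) * w) ≤
      -(β ^ 2 * μ) * (1 + (β ^ μ * v ^ (μ / 2)) ^ 2) := by
    have lhs_eq : β ^ μ * (μ / 2 * v ^ (μ / 2 - 1) * w) =
        (μ * β ^ μ * v ^ (μ / 2 - 1)) * ((1 / 2) * w) := by ring
    rw [lhs_eq]
    refine h2.trans (le_of_eq ?_)
    have : μ * β ^ μ * v ^ (μ / 2 - 1) *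
        (-β ^ (2 - μ) * v ^ (1 - μ / 2) - β ^ (2 + μ) * v ^ (1 + μ / 2)) =
        -μ * ((β ^ μ * β ^ (2 - μ)) * (v ^ (μ / 2 - 1) * v ^ (1 - μ / 2)))
        - μ * ((β ^ μ * β ^ (2 + μ)) * (v ^ (μ / 2 - 1) * v ^ (1 + μ / 2))) := by ring
    rw [this, e1, e2, e3, e4]; ring
  have := (div_le_iff₀ hA).2 h3
  rw [div_eq_mul_one_div, mul_comm] at this
  linarith [this]

private lemma mono_step (V V' : ℝ → ℝ) (β μ : ℝ) (hβ : 0 < β) (hμ0 : 0 < μ)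
    (hderiv : ∀ t, 0 ≤ t → HasDerivAt V (V' t) t)
    (hineq : ∀ t, 0 ≤ t → 0 < V t →
      (1 / 2) * V' t ≤ -β ^ (2 - μ) * (V t) ^ (1 - μ / 2)
        - β ^ (2 + μ) * (V t) ^ (1 + μ / 2))
    (u t : ℝ) (hu : 0 ≤ u) (hut : u ≤ t) (hpos : ∀ s ∈ Set.Icc u t, 0 < V s) :
    arctan (β ^ μ * (V t) ^ (μ / 2)) + β ^ 2 * μ * t ≤
      arctan (β ^ μ * (V u) ^ (μ / 2)) + β ^ 2 * μ * u := by
  set g : ℝ → ℝ := fun s => arctan (β ^ μ * (V s) ^ (μ / 2)) + β ^ 2 * μ * s with hg_def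
  have hg : ∀ s ∈ Set.Icc u t, HasDerivAt g
      (1 / (1 + (β ^ μ * (V s) ^ (μ / 2)) ^ 2) *
        (β ^ μ * (μ / 2 * (V s) ^ (μ / 2 - 1) * V' s)) + β ^ 2 * μ) s := by
    intro s hs
    have hs0 : 0 ≤ s := hu.trans hs.1
    have hVs : 0 < V s := hpos s hs
    have h1 : HasDerivAt (fun x => (V x) ^ (μ / 2)) (μ / 2 * (V s) ^ (μ / 2 - 1) * V' s) s := by
      have := (hderiv s hs0).rpow_const (p := μ / 2) (Or.inl hVs.ne')
      convert this using 1
      ring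
    have h2 : HasDerivAt (fun x => β ^ μ * (V x) ^ (μ / 2))
        (β ^ μ * (μ / 2 * (V s) ^ (μ / 2 - 1) * V' s)) s := h1.const_mul _
    have h3 := h2.arctan
    have h4 : HasDerivAt (fun x : ℝ => β ^ 2 * μ * x) (β ^ 2 * μ) s := by
      simpa using (hasDerivAt_id s).const_mul (β ^ 2 * μ)
    exact h3.add h4
  have hanti : AntitoneOn g (Set.Icc u t) := by
    refine antitoneOn_of_hasDerivWithinAt_nonpos (convex_Icc u t)
      (fun s hs => ((hg s hs).continuousAt).continuousWithinAt)
      (f' := fun s => 1 / (1 + (β ^ μ * (V s) ^ (μ / 2)) ^ 2) *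
        (β ^ μ * (μ / 2 * (V s) ^ (μ / 2 - 1) * V' s)) + β ^ 2 * μ)
      (fun s hs => ?_) (fun s hs => ?_)
    · have hs' : s ∈ Set.Icc u t := interior_subset hs
      exact ((hg s hs').hasDerivWithinAt)
    · have hs' : s ∈ Set.Icc u t := interior_subset hs
      exact key_ineq β μ (V s) (V' s) hβ hμ0 (hpos s hs')
        (hineq s (hu.trans hs'.1) (hpos s hs'))
  have := hanti (Set.left_mem_Icc.2 hut) (Set.right_mem_Icc.2 hut) hut
  simpa [hg_def] using this

theorem fixed_time_arctan_comparison
    (V V' : ℝ → ℝ) (β μ : ℝ) (hβ : 0 < β) (hμ0 : 0 < μ) (hμ1 : μ < 1)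
    (hVnn : ∀ t, 0 ≤ t → 0 ≤ V t)
    (hderiv : ∀ t, 0 ≤ t → HasDerivAt V (V' t) t)
    (hineq : ∀ t, 0 ≤ t → 0 < V t →
      (1 / 2) * V' t ≤ -β ^ (2 - μ) * (V t) ^ (1 - μ / 2)
        - β ^ (2 + μ) * (V t) ^ (1 + μ / 2)) :
    (∀ t, 0 ≤ t → (∀ s ∈ Set.Icc (0 : ℝ) t, 0 < V s) →
      arctan (β ^ μ * (V t) ^ (μ / 2)) ≤
        arctan (β ^ μ * (V 0) ^ (μ / 2)) - β ^ 2 * μ * t) ∧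
    (∀ t, arctan (β ^ μ * (V 0) ^ (μ / 2)) / (β ^ 2 * μ) ≤ t → V t = 0) ∧
    arctan (β ^ μ * (V 0) ^ (μ / 2)) / (β ^ 2 * μ) ≤ π / (2 * μ * β ^ 2) := by
  have hb2 : (0:ℝ) < β ^ 2 * μ := by positivity
  have part1 : ∀ t, 0 ≤ t → (∀ s ∈ Set.Icc (0 : ℝ) t, 0 < V s) →
      arctan (β ^ μ * (V t) ^ (μ / 2)) ≤
        arctan (β ^ μ * (V 0) ^ (μ / 2)) - β ^ 2 * μ * t := by
    intro t ht hpos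
    have := mono_step V V' β μ hβ hμ0 hderiv hineq 0 t le_rfl ht hpos
    linarith
  have harct0 : 0 ≤ arctan (β ^ μ * (V 0) ^ (μ / 2)) := by
    have h0 : (0:ℝ) ≤ β ^ μ * (V 0) ^ (μ / 2) := by
      have := hVnn 0 le_rfl
      positivity
    calc (0:ℝ) = arctan 0 := arctan_zero.symm
    _ ≤ _ := arctan_strictMono.monotone h0
  have hT0 : 0 ≤ arctan (β ^ μ * (V 0) ^ (μ / 2)) / (β ^ 2 * μ) := div_nonneg harct0 hb2.le
  refine ⟨part1, ?_, ?_⟩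
  · intro t ht
    have ht0 : 0 ≤ t := hT0.trans ht
    by_contra hVt
    have hVtpos : 0 < V t := lt_of_le_of_ne (hVnn t ht0) (Ne.symm hVt)
    -- arctan bound at t
    have harc_t_pos : 0 < arctan (β ^ μ * (V t) ^ (μ / 2)) := by
      have h0 : (0:ℝ) < β ^ μ * (V t) ^ (μ / 2) := by positivity
      calc (0:ℝ) = arctan 0 := arctan_zero.symm
      _ < _ := arctan_strictMono h0
    have hbt : arctan (β ^ μ * (V 0) ^ (μ / 2)) ≤ β ^ 2 * μ * t := by
      rw [div_le_iff₀ hb2] at ht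
      linarith [ht]
    by_cases hS : ∃ a ∈ Set.Icc (0:ℝ) t, V a = 0
    · obtain ⟨a₀, ha₀, ha₀0⟩ := hS
      have hVcont : ∀ s, 0 ≤ s → ContinuousAt V s := fun s hs => (hderiv s hs).continuousAt
      set S : Set ℝ := Set.Icc (0:ℝ) t ∩ V ⁻¹' {0} with hS_def
      have hSne : S.Nonempty := ⟨a₀, ha₀, ha₀0⟩
      have hVcontOn : ContinuousOn V (Set.Icc (0:ℝ) t) := fun s hs =>
        (hVcont s hs.1).continuousWithinAt
      have hSclosed : IsClosed S :=
        hVcontOn.preimage_isClosed_of_isClosed isClosed_Icc isClosed_singleton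
      have hScompact : IsCompact S :=
        Metric.isCompact_of_isClosed_isBounded hSclosed
          ((Metric.isBounded_Icc (0:ℝ) t).subset Set.inter_subset_left)
      set a := sSup S with ha_def
      have haS : a ∈ S := hScompact.sSup_mem hSne
      have hVa : V a = 0 := haS.2
      have ha0 : 0 ≤ a := haS.1.1
      have hat : a < t := lt_of_le_of_ne haS.1.2 (fun h => hVt (h ▸ hVa))
      have hposIoc : ∀ s, a < s → s ≤ t → 0 < V s := by
        intro s has hst
        rcases lt_or_eq_of_le (hVnn s (ha0.trans has.le)) with h | h
        · exact h
        · exact absurd (le_csSup hScompact.bddAbove ⟨⟨ha0.trans has.le, hst⟩, h.symm⟩)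
            (not_le.2 has)
      set F : ℝ → ℝ := fun u => arctan (β ^ μ * (V u) ^ (μ / 2)) - β ^ 2 * μ * (t - u)
        with hF_def
      have hFcont : ContinuousAt F a := by
        have c1 : ContinuousAt (fun u => (V u) ^ (μ / 2)) a :=
          (Real.continuousAt_rpow_const (V a) (μ / 2) (Or.inr (by positivity))).comp
            (hVcont a ha0)
        have c2 : ContinuousAt (fun u => β ^ μ * (V u) ^ (μ / 2)) a :=
          continuousAt_const.mul c1
        have c3 : ContinuousAt (fun u => arctan (β ^ μ * (V u) ^ (μ / 2))) a :=
          Real.continuous_arctan.continuousAt.comp c2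
        exact c3.sub (continuousAt_const.mul (continuousAt_const.sub continuousAt_id))
      have hFa : F a = -(β ^ 2 * μ * (t - a)) := by
        rw [hF_def]
        simp only [hVa]
        rw [Real.zero_rpow (by positivity : μ / 2 ≠ 0)]
        simp [arctan_zero]
      have htend : Filter.Tendsto F (nhdsWithin a (Set.Ioi a)) (nhds (F a)) :=
        hFcont.tendsto.mono_left nhdsWithin_le_nhds
      have hev : ∀ᶠ u in nhdsWithin a (Set.Ioi a),
          arctan (β ^ μ * (V t) ^ (μ / 2)) ≤ F u := by
        filter_upwards [Ioc_mem_nhdsGT_of_mem (Set.mem_Ico.2 ⟨le_refl a, hat⟩)]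
          with u hu
        have hu0 : 0 ≤ u := ha0.trans hu.1.le
        have hpos' : ∀ s ∈ Set.Icc u t, 0 < V s := fun s hs =>
          hposIoc s (hu.1.trans_le hs.1) hs.2
        have := mono_step V V' β μ hβ hμ0 hderiv hineq u t hu0 hu.2 hpos'
        rw [hF_def]
        dsimp only
        linarith
      have hle : arctan (β ^ μ * (V t) ^ (μ / 2)) ≤ F a := ge_of_tendsto htend hev
      rw [hFa] at hle
      nlinarith [harc_t_pos, hb2, hat]
    · push_neg at hS
      have hpos : ∀ s ∈ Set.Icc (0:ℝ) t, 0 < V s := fun s hs =>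
        lt_of_le_of_ne (hVnn s hs.1) (Ne.symm (hS s hs))
      have := part1 t ht0 hpos
      linarith
  · have h1 : arctan (β ^ μ * (V 0) ^ (μ / 2)) ≤ π / 2 :=
      (arctan_lt_pi_div_two _).le
    rw [div_le_div_iff₀ hb2 (by positivity)]
    nlinarith [h1, hb2, pi_pos]
end

section
/- Let H, U be real Hilbert spaces, A : D(A) ⊂ H → H with ⟨Ay, y⟩ ≤ ω‖y‖² for all y ∈ D(A) (ω ≥ 0), B ∈ L(U,H) with ‖B*y‖ ≥ β‖y‖ (β > 0), and η ∈ H with ‖η‖ ≤ M. Then for every y ∈ D(A) with y ≠ 0, ⟨Ay − (ω/β²)B B* y − ρ B(B*y/‖B*y‖) + η, y⟩ ≤ −(ρβ − M)‖y‖. -/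
/-!
Write `z = B* y`. Moving `B` across the inner product, the two feedback terms contribute
exactly `-(ω/β²)‖z‖² - ρ‖z‖`. Coercivity `‖z‖ ≥ β‖y‖` makes the first term absorb the
quasi-dissipative growth `ω‖y‖²` and the second dominate `ρβ‖y‖`, while Cauchy–Schwarz
bounds the disturbance by `M‖y‖`.
-/

open scoped RealInnerProductSpace

namespace ContinuousLinearMap

variable {H U : Type*} [NormedAddCommGroup H] [InnerProductSpace ℝ H] [CompleteSpace H]
  [NormedAddCommGroup U] [InnerProductSpace ℝ U] [CompleteSpace U]

theorem real_inner_apply_adjoint_self (B : U →L[ℝ] H) (y : H) :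
    ⟪B (adjoint B y), y⟫ = ‖adjoint B y‖ ^ 2 := by
  rw [← adjoint_inner_right, real_inner_self_eq_norm_sq]

theorem real_inner_apply_inv_norm_smul_adjoint (B : U →L[ℝ] H) (y : H) :
    ⟪B (‖adjoint B y‖⁻¹ • adjoint B y), y⟫ = ‖adjoint B y‖ := by
  rw [← adjoint_inner_right, real_inner_smul_left, real_inner_self_eq_norm_sq, sq, ← mul_assoc,
    inv_mul_mul_self]

end ContinuousLinearMap

theorem mul_sq_le_div_sq_mul_sq {ω β t s : ℝ} (hω : 0 ≤ ω) (hβ : 0 < β) (ht : 0 ≤ t)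
    (h : β * t ≤ s) : ω * t ^ 2 ≤ ω / β ^ 2 * s ^ 2 := by
  have hsq : (β * t) ^ 2 ≤ s ^ 2 := pow_le_pow_left₀ (by positivity) h 2
  rw [div_mul_eq_mul_div, le_div_iff₀ (by positivity)]
  nlinarith

open ContinuousLinearMap in
theorem lyapunov_derivative_estimate
    {H U : Type*} [NormedAddCommGroup H] [InnerProductSpace ℝ H] [CompleteSpace H]
    [NormedAddCommGroup U] [InnerProductSpace ℝ U] [CompleteSpace U]
    (D : Submodule ℝ H) (A : D →ₗ[ℝ] H) (B : U →L[ℝ] H)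
    (ω β ρ M : ℝ) (hω : 0 ≤ ω) (hβ : 0 < β) (hρ : 0 < ρ)
    (hA : ∀ y : D, ⟪A y, (y : H)⟫ ≤ ω * ‖(y : H)‖ ^ 2)
    (hcoerc : ∀ y : H, β * ‖y‖ ≤ ‖(ContinuousLinearMap.adjoint B) y‖)
    (η : H) (hη : ‖η‖ ≤ M) :
    ∀ y : D, (y : H) ≠ 0 →
      ⟪A y - (ω / β ^ 2) • B ((ContinuousLinearMap.adjoint B) (y : H))
        - ρ • B ((‖(ContinuousLinearMap.adjoint B) (y : H)‖)⁻¹ •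
            (ContinuousLinearMap.adjoint B) (y : H)) + η, (y : H)⟫
        ≤ -(ρ * β - M) * ‖(y : H)‖ := by
  intro y _
  have hdamping := mul_sq_le_div_sq_mul_sq hω hβ (norm_nonneg _) (hcoerc y)
  have hfeedback := mul_le_mul_of_nonneg_left (hcoerc y) hρ.le
  have hdisturbance : ⟪η, (y : H)⟫ ≤ M * ‖(y : H)‖ :=
    (real_inner_le_norm _ _).trans (mul_le_mul_of_nonneg_right hη (norm_nonneg _))
  simp only [inner_add_left, inner_sub_left, real_inner_smul_left,
    real_inner_apply_adjoint_self, real_inner_apply_inv_norm_smul_adjoint]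
  linarith [hA y]
end

section
/- Let H, U be real Hilbert spaces, B ∈ L(U,H) with ‖B*y‖ ≥ β‖y‖ for all y ∈ H (β > 0), ω ≥ 0, ρ > 0, and suppose A : D(A) ⊂ H → H satisfies ⟨Ay, y⟩ ≤ ω‖y‖². Let y : [0,T) → H be differentiable with y(t) ∈ D(A), satisfying for a.e. t the inclusion y'(t) ∈ A y(t) − (ω/β²) B B* y(t) − ρ B·sign(B* y(t)) + η(t) with ‖η(t)‖ ≤ M < ρβ. Then ‖y(t)‖ ≤ ‖y(0)‖ − (ρβ − M)t whenever t ≤ ‖y(0)‖/(ρβ − M), and y(t) = 0 for all t ≥ ‖y(0)‖/(ρβ − M). -/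
open scoped RealInnerProductSpace

open scoped Classical in
noncomputable def signSet {U : Type*} [NormedAddCommGroup U] [InnerProductSpace ℝ U]
    (x : U) : Set U :=
  if x = 0 then Metric.closedBall (0 : U) 1 else {(‖x‖)⁻¹ • x}

set_option maxHeartbeats 1000000 in
theorem global_finite_time_stability
    {H U : Type*} [NormedAddCommGroup H] [InnerProductSpace ℝ H] [CompleteSpace H]
    [NormedAddCommGroup U] [InnerProductSpace ℝ U] [CompleteSpace U]
    (D : Submodule ℝ H) (A : D →ₗ[ℝ] H) (B : U →L[ℝ] H)
    (ω β ρ M : ℝ) (hω : 0 ≤ ω) (hβ : 0 < β) (hρ : 0 < ρ) (hM : 0 ≤ M)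
    (hgain : M < ρ * β)
    (hA : ∀ y : D, ⟪A y, (y : H)⟫ ≤ ω * ‖(y : H)‖ ^ 2)
    (hcoerc : ∀ y : H, β * ‖y‖ ≤ ‖(ContinuousLinearMap.adjoint B) y‖)
    (y y' η : ℝ → H) (r : ℝ → U)
    (hmem : ∀ t, 0 ≤ t → y t ∈ D)
    (hderiv : ∀ t, 0 ≤ t → HasDerivAt y (y' t) t)
    (hr : ∀ t, 0 ≤ t → r t ∈ signSet ((ContinuousLinearMap.adjoint B) (y t)))
    (hη : ∀ t, 0 ≤ t → ‖η t‖ ≤ M)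
    (heq : ∀ t, ∀ ht : 0 ≤ t,
      y' t = A ⟨y t, hmem t ht⟩
        - (ω / β ^ 2) • B ((ContinuousLinearMap.adjoint B) (y t))
        - ρ • B (r t) + η t) :
    ∀ t, 0 ≤ t →
      (t ≤ ‖y 0‖ / (ρ * β - M) → ‖y t‖ ≤ ‖y 0‖ - (ρ * β - M) * t) ∧
      (‖y 0‖ / (ρ * β - M) ≤ t → y t = 0) := by
  set B' := ContinuousLinearMap.adjoint B with hB'
  set c : ℝ := ρ * β - M with hc
  have hcpos : 0 < c := by simp only [hc]; linarith
  -- key inner product estimate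
  have key : ∀ t, ∀ ht : 0 ≤ t, y t ≠ 0 → ⟪y' t, y t⟫ ≤ -c * ‖y t‖ := by
    intro t ht hy
    have hBy : β * ‖y t‖ ≤ ‖B' (y t)‖ := hcoerc (y t)
    have hynorm : 0 < ‖y t‖ := norm_pos_iff.mpr hy
    have hBy0 : B' (y t) ≠ 0 := by
      intro h0
      rw [h0, norm_zero] at hBy
      nlinarith
    have hrt : r t = (‖B' (y t)‖)⁻¹ • B' (y t) := by
      have h := hr t ht
      simp only [signSet, if_neg hBy0, Set.mem_singleton_iff] at h
      exact h
    have hsum : ⟪y' t, y t⟫ = ⟪(A ⟨y t, hmem t ht⟩ : H), y t⟫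
        - (ω / β ^ 2) * ⟪B (B' (y t)), y t⟫ - ρ * ⟪B (r t), y t⟫ + ⟪η t, y t⟫ := by
      rw [heq t ht]
      simp [inner_sub_left, inner_add_left, real_inner_smul_left, hB']
    have h1 : ⟪(A ⟨y t, hmem t ht⟩ : H), y t⟫ ≤ ω * ‖y t‖ ^ 2 := hA _
    have h2 : ⟪B (B' (y t)), y t⟫ = ‖B' (y t)‖ ^ 2 := by
      rw [real_inner_comm, hB', ← ContinuousLinearMap.adjoint_inner_left,
        real_inner_self_eq_norm_sq]
    have h3 : ⟪B (r t), y t⟫ = ‖B' (y t)‖ := by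
      rw [real_inner_comm, hB', ← ContinuousLinearMap.adjoint_inner_left, hrt,
        real_inner_smul_right, real_inner_self_eq_norm_sq]
      have : ‖(ContinuousLinearMap.adjoint B) (y t)‖ ≠ 0 := by
        rw [← hB']; exact norm_ne_zero_iff.mpr hBy0
      field_simp
      ring
    have h4 : ⟪η t, y t⟫ ≤ M * ‖y t‖ := by
      calc ⟪η t, y t⟫ ≤ ‖η t‖ * ‖y t‖ := real_inner_le_norm _ _
        _ ≤ M * ‖y t‖ := mul_le_mul_of_nonneg_right (hη t ht) (norm_nonneg _)
    have h5 : ω * ‖y t‖ ^ 2 ≤ ω / β ^ 2 * ‖B' (y t)‖ ^ 2 := by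
      have hb2 : (0 : ℝ) < β ^ 2 := by positivity
      have hsq : (β * ‖y t‖) ^ 2 ≤ ‖B' (y t)‖ ^ 2 :=
        pow_le_pow_left₀ (by positivity) hBy 2
      calc ω * ‖y t‖ ^ 2 = ω / β ^ 2 * (β * ‖y t‖) ^ 2 := by field_simp
        _ ≤ ω / β ^ 2 * ‖B' (y t)‖ ^ 2 :=
          mul_le_mul_of_nonneg_left hsq (by positivity)
    have h6 : ρ * β * ‖y t‖ ≤ ρ * ‖B' (y t)‖ := by
      have := mul_le_mul_of_nonneg_left hBy hρ.le
      linarith [mul_assoc ρ β ‖y t‖]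
    rw [hsum, h2, h3]
    have hcc : -c * ‖y t‖ = -(ρ * β * ‖y t‖) + M * ‖y t‖ := by rw [hc]; ring
    rw [hcc]
    linarith
  -- derivative of the norm
  have normderiv : ∀ t, ∀ _ : 0 ≤ t, y t ≠ 0 →
      HasDerivAt (fun u => ‖y u‖) (⟪y' t, y t⟫ / ‖y t‖) t := by
    intro t ht hy
    have hynorm : 0 < ‖y t‖ := norm_pos_iff.mpr hy
    have hq : HasDerivAt (fun u => ⟪y u, y u⟫) (⟪y t, y' t⟫ + ⟪y' t, y t⟫) t :=
      HasDerivAt.inner ℝ (hderiv t ht) (hderiv t ht)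
    have hne : ⟪y t, y t⟫ ≠ 0 := by
      rw [real_inner_self_eq_norm_sq]; positivity
    have hs := hq.sqrt hne
    have hfun : (fun u => Real.sqrt ⟪y u, y u⟫) = fun u => ‖y u‖ := by
      funext u
      rw [real_inner_self_eq_norm_sq, Real.sqrt_sq (norm_nonneg _)]
    have hsqrt : Real.sqrt ⟪y t, y t⟫ = ‖y t‖ := by
      rw [real_inner_self_eq_norm_sq, Real.sqrt_sq (norm_nonneg _)]
    rw [hfun, hsqrt] at hs
    have hval : (⟪y t, y' t⟫ + ⟪y' t, y t⟫) / (2 * ‖y t‖) = ⟪y' t, y t⟫ / ‖y t‖ := by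
      rw [real_inner_comm (y t) (y' t)]
      field_simp
      ring
    rwa [hval] at hs
  -- decay along intervals with no zero
  have decay : ∀ s t : ℝ, 0 ≤ s → s ≤ t → (∀ u ∈ Set.Icc s t, y u ≠ 0) →
      ‖y t‖ + c * t ≤ ‖y s‖ + c * s := by
    intro s t hs hst hne
    have hanti : AntitoneOn (fun u => ‖y u‖ + c * u) (Set.Icc s t) := by
      apply antitoneOn_of_deriv_nonpos (convex_Icc s t)
      · intro u hu
        exact (((hderiv u (hs.trans hu.1)).continuousAt.norm).add
          (continuous_const.mul continuous_id).continuousAt).continuousWithinAt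
      · intro u hu
        rw [interior_Icc] at hu
        have h0u : 0 ≤ u := hs.trans hu.1.le
        exact ((normderiv u h0u (hne u ⟨hu.1.le, hu.2.le⟩)).add
          ((hasDerivAt_id u).const_mul c)).differentiableAt.differentiableWithinAt
      · intro u hu
        rw [interior_Icc] at hu
        have h0u : 0 ≤ u := hs.trans hu.1.le
        have hyu : y u ≠ 0 := hne u ⟨hu.1.le, hu.2.le⟩
        have hynorm : 0 < ‖y u‖ := norm_pos_iff.mpr hyu
        have hd : HasDerivAt (fun v => ‖y v‖ + c * v) (⟪y' u, y u⟫ / ‖y u‖ + c * 1) u :=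
          (normderiv u h0u hyu).add ((hasDerivAt_id u).const_mul c)
        rw [hd.deriv]
        have hk := key u h0u hyu
        have : ⟪y' u, y u⟫ / ‖y u‖ ≤ -c := by
          rw [div_le_iff₀ hynorm]
          linarith
        linarith
    have := hanti (Set.left_mem_Icc.mpr hst) (Set.right_mem_Icc.mpr hst) hst
    simpa using this
  -- once zero, always zero
  have stay : ∀ s t : ℝ, 0 ≤ s → s ≤ t → y s = 0 → y t = 0 := by
    intro s t hs hst hys
    by_contra hyt
    set K := {u : ℝ | u ∈ Set.Icc s t ∧ y u = 0} with hK
    have hsK : s ∈ K := ⟨Set.left_mem_Icc.mpr hst, hys⟩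
    have hbdd : BddAbove K := ⟨t, fun u hu => hu.1.2⟩
    set s' := sSup K with hs'
    have hss' : s ≤ s' := le_csSup hbdd hsK
    have hs't : s' ≤ t := csSup_le ⟨s, hsK⟩ fun u hu => hu.1.2
    have h0s' : 0 ≤ s' := hs.trans hss'
    -- y s' = 0 by continuity
    have hys' : y s' = 0 := by
      by_contra hne
      have hcont : ContinuousAt y s' := (hderiv s' h0s').continuousAt
      rcases Metric.continuousAt_iff.mp hcont ‖y s'‖ (norm_pos_iff.mpr hne) with ⟨δ, hδ, hball⟩
      obtain ⟨u, huK, hu⟩ := exists_lt_of_lt_csSup ⟨s, hsK⟩ (by linarith : s' - δ < s')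
      have hud : dist u s' < δ := by
        rw [Real.dist_eq, abs_lt]
        have : u ≤ s' := le_csSup hbdd huK
        constructor <;> linarith
      have := hball hud
      rw [huK.2, dist_zero_left] at this
      exact lt_irrefl _ this
    have hs'lt : s' < t := by
      rcases lt_or_eq_of_le hs't with h | h
      · exact h
      · exact absurd (h ▸ hys') hyt
    -- pick u slightly above s'
    have hcont : ContinuousAt y s' := (hderiv s' h0s').continuousAt
    rcases Metric.continuousAt_iff.mp hcont (c * (t - s') / 2)
      (by have h1 := hs'lt; have h2 := hcpos; nlinarith) with ⟨δ, hδ, hball⟩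
    set u := s' + min (δ / 2) ((t - s') / 4) with hu
    have hmin_pos : 0 < min (δ / 2) ((t - s') / 4) := by
      apply lt_min <;> linarith
    have hmin1 : min (δ / 2) ((t - s') / 4) ≤ δ / 2 := min_le_left _ _
    have hmin2 : min (δ / 2) ((t - s') / 4) ≤ (t - s') / 4 := min_le_right _ _
    have hs'u : s' < u := by simp only [hu]; linarith
    have hut : u ≤ t := by simp only [hu]; linarith
    have hud : dist u s' < δ := by
      rw [Real.dist_eq]
      simp only [hu]
      rw [abs_of_nonneg (by linarith)]
      linarith
    have hyu_small : ‖y u‖ < c * (t - s') / 2 := by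
      have := hball hud
      rwa [hys', dist_zero_right] at this
    have hne : ∀ v ∈ Set.Icc u t, y v ≠ 0 := by
      intro v hv hv0
      have hvK : v ∈ K := ⟨⟨hss'.trans (hs'u.le.trans hv.1), hv.2⟩, hv0⟩
      have : v ≤ s' := le_csSup hbdd hvK
      have : s' < v := lt_of_lt_of_le hs'u hv.1
      linarith
    have hdec := decay u t (h0s'.trans hs'u.le) hut hne
    have htu : (t - s') / 2 ≤ t - u := by simp only [hu]; linarith
    have h0 : 0 ≤ ‖y t‖ := norm_nonneg _
    have hmul : c * ((t - s') / 2) ≤ c * (t - u) := mul_le_mul_of_nonneg_left htu hcpos.le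
    have he1 : c * (t - u) = c * t - c * u := by ring
    have he2 : c * ((t - s') / 2) = c * (t - s') / 2 := by ring
    clear_value u s' K c
    linarith
  -- main conclusion
  intro t ht
  constructor
  · intro hle
    have hct : c * t ≤ ‖y 0‖ := by
      rw [le_div_iff₀ hcpos] at hle
      linarith
    by_cases hall : ∀ u ∈ Set.Icc (0 : ℝ) t, y u ≠ 0
    · have := decay 0 t le_rfl ht hall
      simpa using by linarith
    · push_neg at hall
      obtain ⟨u, hu, hyu⟩ := hall
      have : y t = 0 := stay u t hu.1 hu.2 hyu
      rw [this, norm_zero]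
      linarith
  · intro hge
    by_cases hall : ∀ u ∈ Set.Icc (0 : ℝ) t, y u ≠ 0
    · have hd := decay 0 t le_rfl ht hall
      have h1 : ‖y 0‖ ≤ c * t := by
        rw [div_le_iff₀ hcpos] at hge
        linarith
      have h2 : ‖y t‖ ≤ 0 := by simp at hd; linarith
      exact norm_le_zero_iff.mp h2
    · push_neg at hall
      obtain ⟨u, hu, hyu⟩ := hall
      exact stay u t hu.1 hu.2 hyu
end
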